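/- Let d ≥ 1 be an integer, α_1, …, α_d real numbers with α_i > -1, λ = (d+1)^(d+1), μ = ∏_{i=1}^d (α_i+1), and assume 4λ²μ² - 4λ²μ - 8λμ + 3 > 0 and 2λμ > 1. Define f(z) = ∑_{n≥0} A_n z^(n(d+1)+1) with A_n = (-1)^n / (n! (d+1)^(n(d+1)) ∏_{i=1}^d (α_i+1)_n). Then f is injective on the open unit disk {z ∈ ℂ : |z| < 1}. -/

import Mathlib

/-!
The terms of `f` beyond `z` have coefficients bounded by `2 t ^ n` with `t = 1 / (2 λ μ) < 1`,
since `n! ≥ 2 ^ n / 2` and `(α + 1)_n ≥ (α + 1) ^ n`. As `‖z ^ m - w ^ m‖ ≤ m ‖z - w‖` on the closed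
unit disk, the tail of `f` is Lipschitz there with constant `∑ 2 (n (d + 1) + 1) t ^ n` (over `n ≥ 1`),
and the condition on `λ` and `μ` makes this constant smaller than `1`. So `f` is the identity plus a
contraction, hence injective.
-/

open Complex Metric Set
open scoped Nat

theorem pow_le_ascPochhammer_eval {S : Type*} [Ring S] [PartialOrder S] [IsStrictOrderedRing S]
    {x : S} (hx : 0 ≤ x) (n : ℕ) : x ^ n ≤ (ascPochhammer S n).eval x := by
  have h := pow_le_descPochhammer_eval (S := S) (n := n) (s := x + n - 1)
    (sub_le_sub_right (le_add_of_nonneg_left hx) 1)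
  rwa [descPochhammer_eval_eq_ascPochhammer, show x + n - 1 - n + 1 = x by abel] at h

theorem Nat.two_pow_le_two_mul_factorial (n : ℕ) : 2 ^ n ≤ 2 * n ! := by
  cases n with
  | zero => simp
  | succ n =>
    have h : 2 ^ n ≤ (n + 1)! := by simpa [add_comm] using @Nat.factorial_mul_pow_le_factorial 1 n
    rw [pow_succ']
    exact Nat.mul_le_mul_left 2 h

theorem inv_factorial_mul_pow_mul_prod_ascPochhammer_le {ι : Type*} [Fintype ι] {x : ι → ℝ}
    (hx : ∀ i, 0 < x i) {b : ℝ} (hb : 0 < b) (n : ℕ) :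
    (n ! * b ^ n * ∏ i, (ascPochhammer ℝ n).eval (x i))⁻¹ ≤ 2 * (2 * b * ∏ i, x i)⁻¹ ^ n := by
  have hprod : (∏ i, x i) ^ n ≤ ∏ i, (ascPochhammer ℝ n).eval (x i) := by
    rw [← Finset.prod_pow]
    exact Finset.prod_le_prod (fun i _ => (pow_pos (hx i) n).le)
      (fun i _ => pow_le_ascPochhammer_eval (hx i).le n)
  have hfact : (2 : ℝ) ^ n ≤ 2 * n ! := by exact_mod_cast Nat.two_pow_le_two_mul_factorial n
  have hxpos : 0 < ∏ i, x i := Finset.prod_pos fun i _ => hx i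
  calc (n ! * b ^ n * ∏ i, (ascPochhammer ℝ n).eval (x i))⁻¹
      ≤ ((2 * b * ∏ i, x i) ^ n / 2)⁻¹ := by
        refine inv_anti₀ (by positivity) ?_
        rw [div_le_iff₀ two_pos, mul_pow, mul_pow]
        calc 2 ^ n * b ^ n * (∏ i, x i) ^ n
            ≤ (2 * n !) * b ^ n * ∏ i, (ascPochhammer ℝ n).eval (x i) := by gcongr
          _ = _ := by ring
    _ = 2 * (2 * b * ∏ i, x i)⁻¹ ^ n := by rw [inv_div, inv_pow, div_eq_mul_inv]

theorem hasSum_succ_mul_add_one_mul_pow_succ {k t : ℝ} (ht₀ : 0 ≤ t) (ht₁ : t < 1) :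
    HasSum (fun n : ℕ => (((n : ℝ) + 1) * k + 1) * t ^ (n + 1))
      (k * t / (1 - t) ^ 2 + t / (1 - t)) := by
  have htnorm : ‖t‖ < 1 := by rwa [Real.norm_eq_abs, abs_of_nonneg ht₀]
  have h := ((hasSum_coe_mul_geometric_of_norm_lt_one htnorm).mul_left k).add
    (hasSum_geometric_of_lt_one ht₀ ht₁)
  have ht : 1 - t ≠ 0 := by linarith
  have h' := (hasSum_nat_add_iff' 1).2 h
  rw [Finset.sum_range_one] at h'
  have hterm : (fun n : ℕ => (((n : ℝ) + 1) * k + 1) * t ^ (n + 1)) =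
      fun n => k * (((n + 1 : ℕ) : ℝ) * t ^ (n + 1)) + t ^ (n + 1) := by
    funext n
    push_cast
    ring
  have hvalue : k * t / (1 - t) ^ 2 + t / (1 - t) =
      k * (t / (1 - t) ^ 2) + (1 - t)⁻¹ - (k * ((0 : ℕ) * t ^ 0) + t ^ 0) := by
    field_simp
    ring
  rwa [hterm, hvalue]

theorem two_mul_div_one_sub_sq_add_div_one_sub_lt_one {k t : ℝ} (ht : t < 1)
    (h : 2 * k * t < (1 - t) * (1 - 3 * t)) : 2 * (k * t / (1 - t) ^ 2 + t / (1 - t)) < 1 := by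
  have h1t : 0 < 1 - t := by linarith
  rw [show 2 * (k * t / (1 - t) ^ 2 + t / (1 - t)) = 2 * (k * t + t * (1 - t)) / (1 - t) ^ 2 by
    field_simp, div_lt_one (by positivity)]
  linarith

section PowerSeries

theorem norm_pow_sub_pow_le_of_norm_le_one {R : Type*} [SeminormedRing R] [NormOneClass R]
    {z w : R} (hz : ‖z‖ ≤ 1) (hw : ‖w‖ ≤ 1) (n : ℕ) : ‖z ^ n - w ^ n‖ ≤ n * ‖z - w‖ := by
  induction n with
  | zero => simp
  | succ n ih =>
    have hwn : ‖w ^ n‖ ≤ 1 := (norm_pow_le w n).trans (pow_le_one₀ (norm_nonneg w) hw)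
    calc ‖z ^ (n + 1) - w ^ (n + 1)‖ = ‖z * (z ^ n - w ^ n) + (z - w) * w ^ n‖ := by
          rw [pow_succ', pow_succ' w]; noncomm_ring
      _ ≤ ‖z‖ * ‖z ^ n - w ^ n‖ + ‖z - w‖ * ‖w ^ n‖ :=
          norm_add_le_of_le (norm_mul_le _ _) (norm_mul_le _ _)
      _ ≤ 1 * (n * ‖z - w‖) + ‖z - w‖ * 1 := by gcongr
      _ = (n + 1 : ℕ) * ‖z - w‖ := by push_cast; ring

variable {𝕜 : Type*} [NormedField 𝕜] [CompleteSpace 𝕜] {c : ℕ → 𝕜} {m : ℕ → ℕ}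

theorem summable_mul_pow_of_norm_le_one (hm : ∀ n, m n ≠ 0)
    (hc : Summable fun n => m n * ‖c n‖) {z : 𝕜} (hz : ‖z‖ ≤ 1) :
    Summable fun n => c n * z ^ m n := by
  refine Summable.of_norm_bounded hc fun n => ?_
  have hm1 : (1 : ℝ) ≤ m n := by exact_mod_cast Nat.one_le_iff_ne_zero.2 (hm n)
  rw [norm_mul, norm_pow]
  calc ‖c n‖ * ‖z‖ ^ m n ≤ 1 * ‖c n‖ := by
        rw [one_mul]; exact mul_le_of_le_one_right (norm_nonneg _) (pow_le_one₀ (norm_nonneg z) hz)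
    _ ≤ m n * ‖c n‖ := by gcongr

theorem norm_tsum_mul_pow_sub_tsum_mul_pow_le (hm : ∀ n, m n ≠ 0)
    (hc : Summable fun n => m n * ‖c n‖) {z w : 𝕜} (hz : ‖z‖ ≤ 1) (hw : ‖w‖ ≤ 1) :
    ‖∑' n, c n * z ^ m n - ∑' n, c n * w ^ m n‖ ≤ (∑' n, m n * ‖c n‖) * ‖z - w‖ := by
  have hterm : ∀ n, ‖c n * z ^ m n - c n * w ^ m n‖ ≤ m n * ‖c n‖ * ‖z - w‖ := fun n => by
    rw [← mul_sub, norm_mul, mul_comm (m n : ℝ), mul_assoc]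
    gcongr
    exact norm_pow_sub_pow_le_of_norm_le_one hz hw _
  rw [← (summable_mul_pow_of_norm_le_one hm hc hz).tsum_sub
    (summable_mul_pow_of_norm_le_one hm hc hw), ← tsum_mul_right]
  exact tsum_of_norm_bounded (hc.mul_right _).hasSum hterm

theorem injOn_tsum_mul_pow_closedBall {a : ℕ → ℝ} {s : ℝ} (hm₀ : m 0 = 1)
    (hm : ∀ n, m (n + 1) ≠ 0) (hle : ∀ n, m (n + 1) * ‖c (n + 1)‖ ≤ a n) (ha : HasSum a s)
    (hs : s < ‖c 0‖) : InjOn (fun z => ∑' n, c n * z ^ m n) (closedBall 0 1) := by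
  have hc : Summable fun n => m (n + 1) * ‖c (n + 1)‖ :=
    ha.summable.of_nonneg_of_le (fun n => by positivity) hle
  have hlt : ∑' n, m (n + 1) * ‖c (n + 1)‖ < ‖c 0‖ :=
    (hc.tsum_le_tsum hle ha.summable).trans_lt (ha.tsum_eq ▸ hs)
  intro z hz w hw hzw
  rw [mem_closedBall_zero_iff] at hz hw
  have hsplit : ∀ u : 𝕜, ‖u‖ ≤ 1 →
      ∑' n, c n * u ^ m n = c 0 * u + ∑' n, c (n + 1) * u ^ m (n + 1) := fun u hu => by
    rw [tsum_eq_zero_add' (f := fun n => c n * u ^ m n)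
      (summable_mul_pow_of_norm_le_one (c := fun n => c (n + 1)) hm hc hu), hm₀, pow_one]
  dsimp only at hzw
  rw [hsplit z hz, hsplit w hw] at hzw
  have htail := norm_tsum_mul_pow_sub_tsum_mul_pow_le (c := fun n => c (n + 1))
    (m := fun n => m (n + 1)) hm hc hz hw
  rw [show ∑' n, c (n + 1) * z ^ m (n + 1) - ∑' n, c (n + 1) * w ^ m (n + 1) = c 0 * (w - z) by
    linear_combination hzw, norm_mul, norm_sub_rev] at htail
  by_contra hne
  have hpos : 0 < ‖z - w‖ := norm_pos_iff.2 (sub_ne_zero.2 hne)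
  exact (mul_lt_mul_of_pos_right hlt hpos).not_ge htail

end PowerSeries

noncomputable def hyperBesselCoeff (d : ℕ) (α : Fin d → ℝ) (n : ℕ) : ℝ :=
  (-1) ^ n / (n ! * (d + 1 : ℝ) ^ (n * (d + 1)) * ∏ i, (ascPochhammer ℝ n).eval (α i + 1))

theorem abs_hyperBesselCoeff_le {d : ℕ} {α : Fin d → ℝ} (hα : ∀ i, 0 < α i + 1) (n : ℕ) :
    |hyperBesselCoeff d α n| ≤ 2 * (2 * (d + 1 : ℝ) ^ (d + 1) * ∏ i, (α i + 1))⁻¹ ^ n := by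
  have hpos : 0 < ∏ i, (ascPochhammer ℝ n).eval (α i + 1) :=
    Finset.prod_pos fun i _ => ascPochhammer_pos n _ (hα i)
  rw [hyperBesselCoeff, mul_comm n (d + 1), pow_mul, abs_div, abs_neg_one_pow, one_div,
    abs_of_pos (by positivity)]
  exact inv_factorial_mul_pow_mul_prod_ascPochhammer_le hα (by positivity) n

theorem hyperBessel_injOn_general (d : ℕ) (α : Fin d → ℝ)
    (hα : ∀ i, α i > -1)
    (lam mu : ℝ) (hlam : lam = (d + 1 : ℝ) ^ (d + 1)) (hmu : mu = ∏ i, (α i + 1))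
    (hcond : 4 * lam ^ 2 * mu ^ 2 - 4 * lam ^ 2 * mu - 8 * lam * mu + 3 > 0)
    (hcond2 : 2 * lam * mu > 1)
    (A : ℕ → ℝ)
    (hA : ∀ n, A n = (-1) ^ n /
      (n.factorial * (d + 1 : ℝ) ^ (n * (d + 1)) * ∏ i, (ascPochhammer ℝ n).eval (α i + 1)))
    (f : ℂ → ℂ) (hf : ∀ z, f z = ∑' n : ℕ, (A n : ℂ) * z ^ (n * (d + 1) + 1)) :
    Set.InjOn f {z : ℂ | ‖z‖ < 1} := by
  have hαpos : ∀ i, 0 < α i + 1 := fun i => by linarith [hα i]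
  have hmu₀ : 0 < mu := hmu ▸ Finset.prod_pos fun i _ => hαpos i
  have hlam₀ : 0 < lam := hlam ▸ by positivity
  set t := (2 * lam * mu)⁻¹ with ht
  have ht₀ : 0 < t := by positivity
  have ht₁ : t < 1 := inv_lt_one_of_one_lt₀ hcond2
  have hA_le : ∀ n, ‖(A n : ℂ)‖ ≤ 2 * t ^ n := fun n => by
    rw [norm_real, Real.norm_eq_abs, hA n, ht, hlam, hmu]
    exact abs_hyperBesselCoeff_le hαpos n
  have hG := hasSum_succ_mul_add_one_mul_pow_succ (k := (d : ℝ) + 1) ht₀.le ht₁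
  have hbound : ∀ n, (((n + 1) * (d + 1) + 1 : ℕ) : ℝ) * ‖(A (n + 1) : ℂ)‖ ≤
      2 * ((((n : ℝ) + 1) * ((d : ℝ) + 1) + 1) * t ^ (n + 1)) := fun n => by
    push_cast
    rw [mul_left_comm]
    exact mul_le_mul_of_nonneg_left (hA_le _) (by positivity)
  have hkt : 2 * ((d : ℝ) + 1) * t < (1 - t) * (1 - 3 * t) := by
    have hdlam : (d : ℝ) + 1 ≤ lam := hlam ▸ le_self_pow₀ (by linarith) (Nat.succ_ne_zero d)
    have hcond_t : (1 - t) * (1 - 3 * t) - 2 * lam * t =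
        (4 * lam ^ 2 * mu ^ 2 - 4 * lam ^ 2 * mu - 8 * lam * mu + 3) * t ^ 2 := by
      rw [ht]; field_simp; ring
    nlinarith [mul_pos hcond (pow_pos ht₀ 2)]
  rw [show f = fun z => ∑' n : ℕ, (A n : ℂ) * z ^ (n * (d + 1) + 1) from funext hf]
  refine (injOn_tsum_mul_pow_closedBall (c := fun n => (A n : ℂ))
    (m := fun n => n * (d + 1) + 1) (by simp) (fun n => Nat.succ_ne_zero _) hbound
    (hG.mul_left 2) ?_).mono fun z hz => mem_closedBall_zero_iff.2 hz.le
  simpa [hA] using two_mul_div_one_sub_sq_add_div_one_sub_lt_one ht₁ hkt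

theorem hyperBessel_injOn (d : ℕ) (hd : 1 ≤ d) (α : Fin d → ℝ)
    (hα : ∀ i, α i > -1)
    (lam mu : ℝ) (hlam : lam = (d + 1 : ℝ) ^ (d + 1)) (hmu : mu = ∏ i, (α i + 1))
    (hcond : 4 * lam ^ 2 * mu ^ 2 - 4 * lam ^ 2 * mu - 8 * lam * mu + 3 > 0)
    (hcond2 : 2 * lam * mu > 1)
    (A : ℕ → ℝ)
    (hA : ∀ n, A n = (-1) ^ n /
      (n.factorial * (d + 1 : ℝ) ^ (n * (d + 1)) * ∏ i, (ascPochhammer ℝ n).eval (α i + 1)))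
    (f : ℂ → ℂ) (hf : ∀ z, f z = ∑' n : ℕ, (A n : ℂ) * z ^ (n * (d + 1) + 1)) :
    Set.InjOn f {z : ℂ | ‖z‖ < 1} :=
  hyperBessel_injOn_general d α hα lam mu hlam hmu hcond hcond2 A hA f hf
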